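/- Let Θ be an arbitrary threshold function, let P be associated with Θ through the penalty construction, and let F(B, C) = (1/2)‖Y − XB − C‖_F² + Σ_{i=1}^n P(‖c_i‖₂; λ). Consider the alternating algorithm: C^{(t+1)} = vecΘ(Y − XB^{(t)}; λ) and B^{(t+1)} = R(X, Y − C^{(t+1)}, r), where R(X, Z, r) is a global minimizer of ‖Z − XB‖_F² subject to rank(B) ≤ r. Then for any λ ≥ 0 and r ≥ 0 the iterates satisfy F(B^{(t)}, C^{(t)}) ≥ F(B^{(t+1)}, C^{(t+1)}) for all t, and hence F(B^{(t)}, C^{(t)}) converges as t → ∞. -/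

import Mathlib

/-!
Each half-step minimizes `F` exactly in one block of variables. For the `B`-step this is the
definition of `R`. For the `C`-step the objective splits over rows, and by the reverse triangle
inequality and `‖vecΘ z‖ = Θ(‖z‖)` each row reduces to the scalar problem
`min_{v ≥ 0} ½ (s - v)² + P(v)`, solved by `v = Θ(s)`: the excess of the objective at `v` over
its value at `Θ(s)` is `∫_{Θ(s)}^{v} (Θ⁻¹(u) - s) du + q(v) ≥ 0`. Finally `F ≥ n P(0)`, so the
nonincreasing values converge.
-/

open MeasureTheory Matrix Filter
open scoped ENNReal NNReal BigOperators

noncomputable section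

namespace RRRStmt

/-- Squared Frobenius norm `‖A‖_F²`. -/
def froSq {n m : ℕ} (A : Matrix (Fin n) (Fin m) ℝ) : ℝ := ∑ i, ∑ j, (A i j) ^ 2

/-- Frobenius norm `‖A‖_F`. -/
def fro {n m : ℕ} (A : Matrix (Fin n) (Fin m) ℝ) : ℝ := Real.sqrt (froSq A)

/-- ℓ₂ norm of the `i`-th row of `A`. -/
def rowNorm {n m : ℕ} (A : Matrix (Fin n) (Fin m) ℝ) (i : Fin n) : ℝ :=
  Real.sqrt (∑ j, (A i j) ^ 2)

open Classical in
/-- Number of nonzero rows, `‖A‖_{2,0}`. -/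
def numNZRows {n m : ℕ} (A : Matrix (Fin n) (Fin m) ℝ) : ℕ :=
  (Finset.univ.filter fun i => A i ≠ 0).card

open Classical in
/-- Row support of `A`: indices of nonzero rows. -/
def rowSupp {n m : ℕ} (A : Matrix (Fin n) (Fin m) ℝ) : Finset (Fin n) :=
  Finset.univ.filter fun i => A i ≠ 0

open Classical in
/-- Number of entries at which two matrices differ, `‖A - B‖₀`. -/
def numDiff {n m : ℕ} (A B : Matrix (Fin n) (Fin m) ℝ) : ℕ :=
  (Finset.univ.filter fun q : Fin n × Fin m => A q.1 q.2 ≠ B q.1 q.2).card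

/-- A threshold function `Θ(t; λ)`: odd, nondecreasing in `t`, tending to `∞`, and with
`0 ≤ Θ(t;λ) ≤ t` for `t ≥ 0`. -/
def IsThresholdFun (Θ : ℝ → ℝ → ℝ) : Prop :=
  (∀ t lam : ℝ, 0 ≤ lam → Θ (-t) lam = -Θ t lam) ∧
  (∀ t t' lam : ℝ, 0 ≤ lam → t ≤ t' → Θ t lam ≤ Θ t' lam) ∧
  (∀ lam : ℝ, 0 ≤ lam → Tendsto (fun t => Θ t lam) atTop atTop) ∧
  (∀ t lam : ℝ, 0 ≤ lam → 0 ≤ t → 0 ≤ Θ t lam ∧ Θ t lam ≤ t)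

/-- `Θ⁻¹(u;λ) = sup {s : Θ(s;λ) ≤ u}`. -/
def ThetaInv (Θ : ℝ → ℝ → ℝ) (lam u : ℝ) : ℝ := sSup {s : ℝ | Θ s lam ≤ u}

/-- `P_Θ(t;λ) = ∫₀^{|t|} (Θ⁻¹(u;λ) - u) du`. -/
def PTheta (Θ : ℝ → ℝ → ℝ) (t lam : ℝ) : ℝ := ∫ u in (0:ℝ)..|t|, (ThetaInv Θ lam u - u)

/-- The penalty `P` is associated with the threshold `Θ` through the penalty construction:
`P(t;λ) - P(0;λ) = P_Θ(t;λ) + q(t;λ)` for some nonnegative `q` vanishing on the range of `Θ`. -/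
def IsPenaltyFor (Θ P : ℝ → ℝ → ℝ) : Prop :=
  ∃ q : ℝ → ℝ → ℝ, (∀ t lam : ℝ, 0 ≤ lam → 0 ≤ q t lam) ∧
    (∀ s lam : ℝ, 0 ≤ lam → q (Θ s lam) lam = 0) ∧
    (∀ t lam : ℝ, 0 ≤ lam → P t lam - P 0 lam = PTheta Θ t lam + q t lam)

/-- Euclidean norm of a vector. -/
def vnorm {m : ℕ} (a : Fin m → ℝ) : ℝ := Real.sqrt (∑ j, (a j) ^ 2)

open Classical in
/-- Multivariate thresholding `vecΘ(a;λ) = a·Θ(‖a‖₂;λ)/‖a‖₂` (and `0` at `0`). -/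
def vecTheta (Θ : ℝ → ℝ → ℝ) (lam : ℝ) {m : ℕ} (a : Fin m → ℝ) : Fin m → ℝ :=
  if a = 0 then 0 else (Θ (vnorm a) lam / vnorm a) • a

/-- Row-wise multivariate thresholding of a matrix. -/
def matTheta (Θ : ℝ → ℝ → ℝ) (lam : ℝ) {n m : ℕ} (A : Matrix (Fin n) (Fin m) ℝ) :
    Matrix (Fin n) (Fin m) ℝ :=
  Matrix.of fun i => vecTheta Θ lam (A i)

/-- Hard-thresholding penalty `P_H(t;λ)`. -/
def PH (t lam : ℝ) : ℝ := if |t| < lam then -t ^ 2 / 2 + lam * |t| else lam ^ 2 / 2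

/-- Law of an `n × m` noise matrix with i.i.d. `N(0, σ²)` entries. -/
def gaussianNoise (n m : ℕ) (σ : ℝ) : Measure (Fin n → Fin m → ℝ) :=
  Measure.pi fun _ => Measure.pi fun _ => ProbabilityTheory.gaussianReal 0 (Real.toNNReal (σ ^ 2))

/-- Robust loss `ρ(t;λ) = ∫₀^{|t|} (u - Θ(u;λ)) du`. -/
def rho (Θ : ℝ → ℝ → ℝ) (lam t : ℝ) : ℝ := ∫ u in (0:ℝ)..|t|, (u - Θ u lam)


/-- The robust reduced-rank regression objective
`F(B,C) = ½‖Y - XB - C‖_F² + ∑ᵢ P(‖cᵢ‖₂;λ)`. -/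
def Fobj {n m p : ℕ} (X : Matrix (Fin n) (Fin p) ℝ) (Y : Matrix (Fin n) (Fin m) ℝ)
    (P : ℝ → ℝ → ℝ) (lam : ℝ) (B : Matrix (Fin p) (Fin m) ℝ)
    (C : Matrix (Fin n) (Fin m) ℝ) : ℝ :=
  (1/2) * froSq (Y - X * B - C) + ∑ i, P (rowNorm C i) lam

namespace IsThresholdFun

variable {Θ : ℝ → ℝ → ℝ} {lam : ℝ}

theorem monotone (hΘ : IsThresholdFun Θ) (hlam : 0 ≤ lam) : Monotone (Θ · lam) :=
  fun _ _ h => hΘ.2.1 _ _ lam hlam h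

theorem apply_nonneg (hΘ : IsThresholdFun Θ) (hlam : 0 ≤ lam) {t : ℝ} (ht : 0 ≤ t) :
    0 ≤ Θ t lam :=
  (hΘ.2.2.2 t lam hlam ht).1

theorem apply_le_self (hΘ : IsThresholdFun Θ) (hlam : 0 ≤ lam) {t : ℝ} (ht : 0 ≤ t) :
    Θ t lam ≤ t :=
  (hΘ.2.2.2 t lam hlam ht).2

theorem apply_zero (hΘ : IsThresholdFun Θ) (hlam : 0 ≤ lam) : Θ 0 lam = 0 :=
  le_antisymm (hΘ.apply_le_self hlam le_rfl) (hΘ.apply_nonneg hlam le_rfl)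

theorem bddAbove_setOf_le (hΘ : IsThresholdFun Θ) (hlam : 0 ≤ lam) (u : ℝ) :
    BddAbove {s : ℝ | Θ s lam ≤ u} := by
  obtain ⟨M, hM⟩ := ((hΘ.2.2.1 lam hlam).eventually_gt_atTop u).exists_forall_of_atTop
  exact ⟨M, fun s hs => le_of_not_gt fun hMs => (hM s hMs.le).not_ge hs⟩

theorem le_thetaInv (hΘ : IsThresholdFun Θ) (hlam : 0 ≤ lam) {s u : ℝ} (h : Θ s lam ≤ u) :
    s ≤ ThetaInv Θ lam u :=
  le_csSup (hΘ.bddAbove_setOf_le hlam u) h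

theorem self_le_thetaInv (hΘ : IsThresholdFun Θ) (hlam : 0 ≤ lam) {u : ℝ} (hu : 0 ≤ u) :
    u ≤ ThetaInv Θ lam u :=
  hΘ.le_thetaInv hlam (hΘ.apply_le_self hlam hu)

theorem thetaInv_le (hΘ : IsThresholdFun Θ) (hlam : 0 ≤ lam) {s u : ℝ} (hu : 0 ≤ u)
    (h : u < Θ s lam) : ThetaInv Θ lam u ≤ s :=
  csSup_le ⟨u, hΘ.apply_le_self hlam hu⟩ fun _ hs' =>
    le_of_not_gt fun hss' => (h.trans_le (hΘ.monotone hlam hss'.le)).not_ge hs'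

theorem thetaInv_monotoneOn (hΘ : IsThresholdFun Θ) (hlam : 0 ≤ lam) :
    MonotoneOn (ThetaInv Θ lam) (Set.Ici 0) := fun u hu _ _ huv =>
  csSup_le_csSup (hΘ.bddAbove_setOf_le hlam _) ⟨u, hΘ.apply_le_self hlam hu⟩
    fun _ hs => le_trans hs huv

theorem intervalIntegrable_thetaInv_sub_id (hΘ : IsThresholdFun Θ) (hlam : 0 ≤ lam) {a b : ℝ}
    (ha : 0 ≤ a) (hb : 0 ≤ b) :
    IntervalIntegrable (fun u => ThetaInv Θ lam u - u) volume a b :=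
  ((hΘ.thetaInv_monotoneOn hlam).mono fun _ hx => le_trans (le_inf ha hb) hx.1)
    |>.intervalIntegrable.sub (continuous_id.intervalIntegrable a b)

theorem PTheta_nonneg (hΘ : IsThresholdFun Θ) (hlam : 0 ≤ lam) (t : ℝ) :
    0 ≤ PTheta Θ t lam :=
  intervalIntegral.integral_nonneg (abs_nonneg t) fun _ hu =>
    sub_nonneg.2 (hΘ.self_le_thetaInv hlam hu.1)

theorem PTheta_sub_PTheta (hΘ : IsThresholdFun Θ) (hlam : 0 ≤ lam) {a b : ℝ}
    (ha : 0 ≤ a) (hb : 0 ≤ b) :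
    PTheta Θ b lam - PTheta Θ a lam = ∫ u in a..b, (ThetaInv Θ lam u - u) := by
  rw [PTheta, PTheta, abs_of_nonneg ha, abs_of_nonneg hb]
  exact intervalIntegral.integral_interval_sub_left
    (hΘ.intervalIntegrable_thetaInv_sub_id hlam le_rfl hb)
    (hΘ.intervalIntegrable_thetaInv_sub_id hlam le_rfl ha)

/-- `Θ⁻¹ u ≥ s` for `u ≥ Θ s` and `Θ⁻¹ u ≤ s` for `u < Θ s`, so the integral from `Θ s` is
nonnegative in both directions. -/
theorem integral_thetaInv_sub_nonneg (hΘ : IsThresholdFun Θ) (hlam : 0 ≤ lam) {s v : ℝ}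
    (hv : 0 ≤ v) : 0 ≤ ∫ u in Θ s lam..v, (ThetaInv Θ lam u - s) := by
  rcases le_or_gt (Θ s lam) v with hle | hlt
  · exact intervalIntegral.integral_nonneg hle fun u hu =>
      sub_nonneg.2 (hΘ.le_thetaInv hlam hu.1)
  · rw [intervalIntegral.integral_symm, neg_nonneg, intervalIntegral.integral_of_le hlt.le,
      integral_Ioc_eq_integral_Ioo]
    exact setIntegral_nonpos measurableSet_Ioo fun u hu =>
      sub_nonpos.2 (hΘ.thetaInv_le hlam (hv.trans hu.1.le) hu.2)

theorem half_sq_add_PTheta_le (hΘ : IsThresholdFun Θ) (hlam : 0 ≤ lam) {s v : ℝ}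
    (hs : 0 ≤ s) (hv : 0 ≤ v) :
    1 / 2 * (s - Θ s lam) ^ 2 + PTheta Θ (Θ s lam) lam ≤ 1 / 2 * (s - v) ^ 2 + PTheta Θ v lam := by
  set θ := Θ s lam
  have hquad : ∫ u in θ..v, (u - s) = 1 / 2 * (s - v) ^ 2 - 1 / 2 * (s - θ) ^ 2 := by
    rw [intervalIntegral.integral_comp_sub_right (fun x => x), integral_id]
    ring
  have hsplit : ∫ u in θ..v, (ThetaInv Θ lam u - s)
      = (∫ u in θ..v, (ThetaInv Θ lam u - u)) + ∫ u in θ..v, (u - s) := by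
    have hlin : IntervalIntegrable (fun u => u - s) volume θ v :=
      (continuous_id.sub continuous_const).intervalIntegrable θ v
    rw [← intervalIntegral.integral_add
      (hΘ.intervalIntegrable_thetaInv_sub_id hlam (hΘ.apply_nonneg hlam hs) hv) hlin]
    simp only [sub_add_sub_cancel, θ]
  have hP := hΘ.PTheta_sub_PTheta hlam (hΘ.apply_nonneg hlam hs) hv
  linarith [hΘ.integral_thetaInv_sub_nonneg hlam (s := s) hv]

theorem penalty_zero_le (hΘ : IsThresholdFun Θ) {P : ℝ → ℝ → ℝ} (hP : IsPenaltyFor Θ P)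
    (hlam : 0 ≤ lam) (t : ℝ) : P 0 lam ≤ P t lam := by
  obtain ⟨q, hq_nonneg, -, hPq⟩ := hP
  linarith [hPq t lam hlam, hq_nonneg t lam hlam, hΘ.PTheta_nonneg hlam t]

/-- `q` vanishes at `Θ s` and is nonnegative at `v`, which reduces this to the same inequality
for `P_Θ`. -/
theorem half_sq_add_penalty_le (hΘ : IsThresholdFun Θ) {P : ℝ → ℝ → ℝ} (hP : IsPenaltyFor Θ P)
    (hlam : 0 ≤ lam) {s v : ℝ} (hs : 0 ≤ s) (hv : 0 ≤ v) :
    1 / 2 * (s - Θ s lam) ^ 2 + P (Θ s lam) lam ≤ 1 / 2 * (s - v) ^ 2 + P v lam := by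
  obtain ⟨q, hq_nonneg, hq_threshold, hPq⟩ := hP
  linarith [hPq (Θ s lam) lam hlam, hPq v lam hlam, hq_threshold s lam hlam, hq_nonneg v lam hlam,
    hΘ.half_sq_add_PTheta_le hlam hs hv]

end IsThresholdFun

theorem vnorm_eq_norm {m : ℕ} (a : Fin m → ℝ) :
    vnorm a = ‖(WithLp.toLp 2 a : EuclideanSpace ℝ (Fin m))‖ := by
  simp [vnorm, EuclideanSpace.norm_eq]

theorem vnorm_nonneg {m : ℕ} (a : Fin m → ℝ) : 0 ≤ vnorm a :=
  Real.sqrt_nonneg _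

theorem sq_vnorm {m : ℕ} (a : Fin m → ℝ) : vnorm a ^ 2 = ∑ j, a j ^ 2 :=
  Real.sq_sqrt (Finset.sum_nonneg fun _ _ => sq_nonneg _)

theorem sq_vnorm_sub_le {m : ℕ} (a b : Fin m → ℝ) : (vnorm a - vnorm b) ^ 2 ≤ vnorm (a - b) ^ 2 := by
  rw [vnorm_eq_norm, vnorm_eq_norm, vnorm_eq_norm, WithLp.toLp_sub, sq_le_sq, abs_norm]
  exact abs_norm_sub_norm_le _ _

theorem vnorm_smul {m : ℕ} (k : ℝ) (a : Fin m → ℝ) : vnorm (k • a) = |k| * vnorm a := by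
  rw [vnorm_eq_norm, vnorm_eq_norm, WithLp.toLp_smul, norm_smul, Real.norm_eq_abs]

section Thresholding

variable {Θ : ℝ → ℝ → ℝ} {lam : ℝ}

theorem vnorm_vecTheta_and_vnorm_sub_vecTheta (hΘ : IsThresholdFun Θ) (hlam : 0 ≤ lam) {m : ℕ}
    (z : Fin m → ℝ) :
    vnorm (vecTheta Θ lam z) = Θ (vnorm z) lam ∧
      vnorm (z - vecTheta Θ lam z) = vnorm z - Θ (vnorm z) lam := by
  by_cases hz : z = 0
  · simp [vecTheta, hz, vnorm, hΘ.apply_zero hlam]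
  have hpos : 0 < vnorm z := by
    rw [vnorm_eq_norm]
    exact norm_pos_iff.2 fun h => hz (congrArg WithLp.ofLp h)
  set k := Θ (vnorm z) lam / vnorm z
  have hk : 0 ≤ k ∧ k ≤ 1 :=
    ⟨div_nonneg (hΘ.apply_nonneg hlam hpos.le) hpos.le,
      div_le_one_of_le₀ (hΘ.apply_le_self hlam hpos.le) hpos.le⟩
  have hkz : k * vnorm z = Θ (vnorm z) lam := div_mul_cancel₀ _ hpos.ne'
  have hsub : z - k • z = (1 - k) • z := by rw [sub_smul, one_smul]
  have hvec : vecTheta Θ lam z = k • z := if_neg hz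
  rw [hvec, hsub, vnorm_smul, vnorm_smul, abs_of_nonneg hk.1, abs_of_nonneg (sub_nonneg.2 hk.2)]
  constructor <;> linarith

theorem half_sq_add_penalty_vecTheta_le (hΘ : IsThresholdFun Θ) {P : ℝ → ℝ → ℝ}
    (hP : IsPenaltyFor Θ P) (hlam : 0 ≤ lam) {m : ℕ} (z c : Fin m → ℝ) :
    1 / 2 * vnorm (z - vecTheta Θ lam z) ^ 2 + P (vnorm (vecTheta Θ lam z)) lam
      ≤ 1 / 2 * vnorm (z - c) ^ 2 + P (vnorm c) lam := by
  obtain ⟨hnorm, hnorm_sub⟩ := vnorm_vecTheta_and_vnorm_sub_vecTheta hΘ hlam z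
  rw [hnorm, hnorm_sub]
  linarith [hΘ.half_sq_add_penalty_le hP hlam (vnorm_nonneg z) (vnorm_nonneg c),
    sq_vnorm_sub_le z c]

end Thresholding

section Objective

variable {n m p : ℕ} (X : Matrix (Fin n) (Fin p) ℝ) (Y : Matrix (Fin n) (Fin m) ℝ)
  (P : ℝ → ℝ → ℝ) (lam : ℝ)

theorem froSq_eq_sum_sq_vnorm (A : Matrix (Fin n) (Fin m) ℝ) : froSq A = ∑ i, vnorm (A i) ^ 2 := by
  simp only [froSq, sq_vnorm]

theorem Fobj_eq_sum_rows (B : Matrix (Fin p) (Fin m) ℝ) (C : Matrix (Fin n) (Fin m) ℝ) :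
    Fobj X Y P lam B C = ∑ i, (1 / 2 * vnorm ((Y - X * B) i - C i) ^ 2 + P (vnorm (C i)) lam) := by
  rw [Fobj, froSq_eq_sum_sq_vnorm, Finset.mul_sum, ← Finset.sum_add_distrib]
  rfl

theorem Fobj_matTheta_le {Θ : ℝ → ℝ → ℝ} (hΘ : IsThresholdFun Θ) (hP : IsPenaltyFor Θ P)
    (hlam : 0 ≤ lam) (B : Matrix (Fin p) (Fin m) ℝ) (C : Matrix (Fin n) (Fin m) ℝ) :
    Fobj X Y P lam B (matTheta Θ lam (Y - X * B)) ≤ Fobj X Y P lam B C := by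
  rw [Fobj_eq_sum_rows, Fobj_eq_sum_rows]
  exact Finset.sum_le_sum fun i _ =>
    half_sq_add_penalty_vecTheta_le hΘ hP hlam ((Y - X * B) i) (C i)

theorem Fobj_le_Fobj_of_froSq_le {B B' : Matrix (Fin p) (Fin m) ℝ} {C : Matrix (Fin n) (Fin m) ℝ}
    (h : froSq (Y - C - X * B') ≤ froSq (Y - C - X * B)) :
    Fobj X Y P lam B' C ≤ Fobj X Y P lam B C := by
  rw [Fobj, Fobj, sub_right_comm Y (X * B'), sub_right_comm Y (X * B)]
  linarith

theorem card_mul_penalty_zero_le_Fobj {Θ : ℝ → ℝ → ℝ} (hΘ : IsThresholdFun Θ)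
    (hP : IsPenaltyFor Θ P) (hlam : 0 ≤ lam) (B : Matrix (Fin p) (Fin m) ℝ)
    (C : Matrix (Fin n) (Fin m) ℝ) : n * P 0 lam ≤ Fobj X Y P lam B C := by
  have hpenalty : ∑ _i : Fin n, P 0 lam ≤ ∑ i, P (rowNorm C i) lam :=
    Finset.sum_le_sum fun i _ => hΘ.penalty_zero_le hP hlam _
  have hfit : 0 ≤ froSq (Y - X * B - C) :=
    Finset.sum_nonneg fun _ _ => Finset.sum_nonneg fun _ _ => sq_nonneg _
  simp only [Finset.sum_const, Finset.card_univ, Fintype.card_fin, nsmul_eq_mul] at hpenalty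
  rw [Fobj]
  linarith

end Objective

/-- Theorem 7, descent part: the alternating algorithm
`C^{(t+1)} = vecΘ(Y - XB^{(t)};λ)`, `B^{(t+1)} = R(X, Y - C^{(t+1)}, r)`
never increases the objective `F`, and `F(B^{(t)}, C^{(t)})` converges. -/
theorem algorithm_descent_and_convergence {n m p : ℕ}
    (X : Matrix (Fin n) (Fin p) ℝ) (Y : Matrix (Fin n) (Fin m) ℝ)
    (Θ P : ℝ → ℝ → ℝ) (hΘ : IsThresholdFun Θ) (hP : IsPenaltyFor Θ P)
    (lam : ℝ) (hlam : 0 ≤ lam) (r : ℕ)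
    (Bseq : ℕ → Matrix (Fin p) (Fin m) ℝ) (Cseq : ℕ → Matrix (Fin n) (Fin m) ℝ)
    (hB0 : (Bseq 0).rank ≤ r)
    (hC : ∀ t : ℕ, Cseq (t + 1) = matTheta Θ lam (Y - X * Bseq t))
    (hBrank : ∀ t : ℕ, (Bseq (t + 1)).rank ≤ r)
    (hBmin : ∀ t : ℕ, ∀ B : Matrix (Fin p) (Fin m) ℝ, B.rank ≤ r →
      froSq (Y - Cseq (t + 1) - X * Bseq (t + 1)) ≤ froSq (Y - Cseq (t + 1) - X * B)) :
    (∀ t : ℕ, Fobj X Y P lam (Bseq (t + 1)) (Cseq (t + 1)) ≤ Fobj X Y P lam (Bseq t) (Cseq t)) ∧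
    (∃ l : ℝ, Tendsto (fun t => Fobj X Y P lam (Bseq t) (Cseq t)) atTop (nhds l)) := by
  set F := fun t => Fobj X Y P lam (Bseq t) (Cseq t)
  have hrank : ∀ t, (Bseq t).rank ≤ r
    | 0 => hB0
    | t + 1 => hBrank t
  have hdescent : ∀ t, F (t + 1) ≤ F t := fun t =>
    calc F (t + 1) ≤ Fobj X Y P lam (Bseq t) (Cseq (t + 1)) :=
          Fobj_le_Fobj_of_froSq_le X Y P lam (hBmin t (Bseq t) (hrank t))
      _ ≤ F t := hC t ▸ Fobj_matTheta_le X Y P lam hΘ hP hlam (Bseq t) (Cseq t)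
  have hbdd : BddBelow (Set.range F) := ⟨n * P 0 lam, by
    rintro _ ⟨t, rfl⟩
    exact card_mul_penalty_zero_le_Fobj X Y P lam hΘ hP hlam (Bseq t) (Cseq t)⟩
  exact ⟨hdescent, _, tendsto_atTop_ciInf (antitone_nat_of_succ_le hdescent) hbdd⟩

end RRRStmt
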